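/- Let G be a finite group, M = ⊕_{χ∈Irr(G)} M_χ the direct sum of one copy of each irreducible complex G-module, with M_1 the trivial module. Let R ⊆ M be a subspace containing M_1 such that π(R ⊗ R) ⊆ R for every G-module homomorphism π : M ⊗ M → M. Then there exists a subgroup H of G such that R = M^H, the subspace of H-fixed vectors of M. -/

import Mathlib

/-!
Let `H` be the pointwise stabiliser of `R`. The matrix coefficients `g ↦ ψ (g • x)`, `x ∈ R`, span
a space `S` of functions on `G`, and `S` is a unital algebra. Indeed, a product of two coefficients
is a coefficient of `M ⊗ M`; by Maschke's theorem every nonzero vector of `M ⊗ M` survives some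
equivariant map onto an irreducible module, which embeds in `M`, so the forms `ψ ∘ π` with
`π : M ⊗ M → M` equivariant span the dual of `M ⊗ M`, and `π (R ⊗ R) ⊆ R`. Points of `G` that `S`
does not separate lie in the same coset `gH`, and a unital algebra of functions on a finite set
contains every function constant on such classes, so `S` contains every coefficient of an
`H`-fixed vector `x`. Finally, averaging the rank-one maps `ψ (·) • y` over `G` gives
`G`-endomorphisms of `M`, which preserve `R` (tensor with the trivial summand); summed over a dual
basis they rebuild `|G| • x` from the coefficients of `x`, so `x ∈ R`.
-/

open TensorProduct

/-- The direct sum (product) of a finite family of representations. -/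
noncomputable def piRep {k G ι : Type*} [CommSemiring k] [Monoid G] (V : ι → Type*)
    [∀ i, AddCommMonoid (V i)] [∀ i, Module k (V i)]
    (ρ : ∀ i, Representation k G (V i)) : Representation k G (∀ i, V i) where
  toFun g := LinearMap.pi fun i => (ρ i g).comp (LinearMap.proj i)
  map_one' := by ext v i; simp
  map_mul' g h := by ext v i; simp

open scoped Pointwise

theorem Subalgebra.mem_of_forall_apply_eq {k X : Type*} [Field k] [Finite X]
    (S : Subalgebra k (X → k)) {F : X → k} (hF : ∀ a b, (∀ f ∈ S, f a = f b) → F a = F b) :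
    F ∈ S := by
  classical
  have := Fintype.ofFinite X
  let s : Setoid X :=
    ⟨fun a b => ∀ f ∈ S, f a = f b, ⟨fun _ _ _ => rfl, fun h f hf => (h f hf).symm,
      fun h h' f hf => (h f hf).trans (h' f hf)⟩⟩
  have hsep : ∀ a b, ∃ h ∈ S, h a = 1 ∧ (¬ s a b → h b = 0) := by
    intro a b
    by_cases hab : s a b
    · exact ⟨1, S.one_mem, rfl, fun h => (h hab).elim⟩
    obtain ⟨f, hf, hfab⟩ : ∃ f ∈ S, f a ≠ f b := by
      by_contra! H
      exact hab H
    refine ⟨(f a - f b)⁻¹ • (f - algebraMap k _ (f b)), S.smul_mem (S.sub_mem hf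
      (S.algebraMap_mem _)) _, ?_, fun _ => by simp⟩
    simp [inv_mul_cancel₀ (sub_ne_zero.mpr hfab)]
  choose h hS h_self h_sep using hsep
  have hprod : ∀ a x, (∏ b, h a b) x = if s a x then 1 else 0 := by
    intro a x
    split_ifs with hax
    · simp only [Finset.prod_apply]
      exact Finset.prod_eq_one fun b _ => (hax _ (hS a b)).symm.trans (h_self a b)
    · simp only [Finset.prod_apply]
      exact Finset.prod_eq_zero (Finset.mem_univ x) (h_sep a x hax)
  have hF' : F = ∑ c : Quotient s, F c.out • ∏ b, h c.out b := by
    ext x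
    rw [Finset.sum_apply, Finset.sum_eq_single ⟦x⟧]
    · have hx : s (⟦x⟧ : Quotient s).out x := Quotient.mk_out (s := s) x
      simp [hprod, hx, hF _ _ hx]
    · intro c _ hc
      have : ¬ s c.out x := fun hcx => hc (by rw [← Quotient.out_eq c]; exact Quotient.sound hcx)
      simp [hprod, this]
    · simp
  rw [hF']
  exact S.sum_mem fun c _ => S.smul_mem (S.prod_mem fun b _ => hS _ b) _

namespace Representation

section Maschke

variable {k G U : Type*} [Field k] [Group G] [Finite G] [NeZero (Nat.card G : k)]
  [AddCommGroup U] [Module k U] (σ : Representation k G U)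

theorem exists_isProj_commute {p : Submodule k U} (hp : ∀ g, ∀ v ∈ p, σ g v ∈ p) :
    ∃ e : Module.End k U, LinearMap.IsProj p e ∧ ∀ g, Commute e (σ g) := by
  obtain ⟨q, hq⟩ := exists_isCompl (⟨p, fun g _ hv => hp g _ hv⟩ : Subrepresentation σ)
  have hpq : IsCompl p q.toSubmodule :=
    ⟨disjoint_iff.2 (congrArg Subrepresentation.toSubmodule hq.inf_eq_bot),
      codisjoint_iff.2 (congrArg Subrepresentation.toSubmodule hq.sup_eq_top)⟩
  refine ⟨p.projection q.toSubmodule hpq, ⟨Submodule.projection_apply_mem hpq,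
    fun _ hx => Submodule.projection_apply_of_mem_left hpq hx⟩, fun g => ?_⟩
  rw [LinearMap.IsIdempotentElem.commute_iff (Submodule.isIdempotentElem_projection hpq),
    Submodule.range_projection, Submodule.ker_projection]
  exact ⟨hp g, q.apply_mem_toSubmodule g⟩

theorem exists_minimal_invariant_apply_ne_zero [FiniteDimensional k U] {u : U} (hu : u ≠ 0) :
    ∃ P : Submodule k U, (∀ g, ∀ v ∈ P, σ g v ∈ P) ∧
      (∀ Q : Submodule k U, (∀ g, ∀ v ∈ Q, σ g v ∈ Q) → Q ≤ P → Q = ⊥ ∨ Q = P) ∧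
      ∃ f : Module.End k U, (∀ x, f x ∈ P) ∧ (∀ g, Commute f (σ g)) ∧ f u ≠ 0 := by
  obtain ⟨P, ⟨hP, f, hfP, hfσ, hfu⟩, hmin⟩ := wellFounded_lt.has_min
    {P : Submodule k U | (∀ g, ∀ v ∈ P, σ g v ∈ P) ∧
      ∃ f : Module.End k U, (∀ x, f x ∈ P) ∧ (∀ g, Commute f (σ g)) ∧ f u ≠ 0}
    ⟨⊤, fun _ _ _ => Submodule.mem_top, 1, fun _ => Submodule.mem_top,
      fun _ => Commute.one_left _, hu⟩
  refine ⟨P, hP, fun Q hQ hQP => ?_, f, hfP, hfσ, hfu⟩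
  by_contra! hne
  obtain ⟨e, he, heσ⟩ := exists_isProj_commute σ hQ
  have he_comm : ∀ g v, e (σ g v) = σ g (e v) := fun g v => LinearMap.congr_fun (heσ g).eq v
  -- either `e * f` or `(1 - e) * f` still detects `u`; their images lie in `Q`, resp. in
  -- `P ⊓ ker e`, and both are strictly smaller than `P`
  by_cases heu : e (f u) = 0
  · have hlt : P ⊓ LinearMap.ker e < P := by
      refine lt_of_le_of_ne inf_le_left fun hPe => hne.1 (eq_bot_iff.2 fun v hv => ?_)
      rw [← he.map_id v hv]
      exact (hPe ▸ inf_le_right : P ≤ LinearMap.ker e) (hQP hv)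
    refine hmin (P ⊓ LinearMap.ker e)
      ⟨fun g v hv => ⟨hP g v hv.1, ?_⟩, (1 - e) * f, fun x => ⟨?_, ?_⟩,
      fun g => ((Commute.one_left _).sub_left (heσ g)).mul_left (hfσ g),
      by simpa [heu] using hfu⟩ hlt
    · simp [LinearMap.mem_ker, he_comm, LinearMap.mem_ker.mp hv.2]
    · exact P.sub_mem (hfP x) (hQP (he.map_mem _))
    · simp [he.map_id _ (he.map_mem _)]
  · exact hmin Q ⟨hQ, e * f, fun x => he.map_mem _, fun g => (heσ g).mul_left (hfσ g), heu⟩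
      (lt_of_le_of_ne hQP hne.2)

theorem exists_irreducible_subrepresentation_apply_ne_zero [FiniteDimensional k U] {u : U}
    (hu : u ≠ 0) :
    ∃ P : Subrepresentation σ, Nontrivial P.toSubmodule ∧
      (∀ q : Submodule k P.toSubmodule, (∀ g, ∀ v ∈ q, P.toRepresentation g v ∈ q) →
        q = ⊥ ∨ q = ⊤) ∧
      ∃ f : IntertwiningMap σ P.toRepresentation, f u ≠ 0 := by
  obtain ⟨P, hP, hmin, f, hfP, hfσ, hfu⟩ := exists_minimal_invariant_apply_ne_zero σ hu
  let P' : Subrepresentation σ := ⟨P, fun g _ hv => hP g _ hv⟩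
  have hinj := Submodule.map_injective_of_injective P.injective_subtype
  refine ⟨P', (Submodule.nontrivial_iff_ne_bot).2 fun h => hfu ?_, fun q hq => ?_,
    ⟨f.codRestrict P hfP, fun g => LinearMap.ext fun x => Subtype.ext
      (LinearMap.congr_fun (hfσ g).eq x)⟩, fun h => hfu congr($h)⟩
  · exact (Submodule.mem_bot k).1 (h ▸ hfP u)
  · refine (hmin (q.map P.subtype) ?_ (Submodule.map_subtype_le P q)).imp
      (fun h => hinj (h.trans (Submodule.map_bot _).symm))
      (fun h => hinj (h.trans (Submodule.map_subtype_top P).symm))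
    rintro g _ ⟨w, hw, rfl⟩
    exact ⟨_, hq g w hw, rfl⟩

end Maschke

theorem exists_equiv_of_forall_irreducible {k : Type} [Field k] {G : Type*} [Monoid G]
    {ι : Type*} {V : ι → Type*} [∀ i, AddCommGroup (V i)] [∀ i, Module k (V i)]
    (ρ : ∀ i, Representation k G (V i))
    (hAll : ∀ (U : Type*) [AddCommGroup U] [Module k U] [FiniteDimensional k U]
      [Nontrivial U] (σ : Representation k G U),
      (∀ p : Submodule k U, (∀ g : G, ∀ v ∈ p, σ g v ∈ p) → p = ⊥ ∨ p = ⊤) →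
      ∃ i, ∃ f : U ≃ₗ[k] V i, ∀ (g : G) (v : U), f (σ g v) = ρ i g (f v))
    {W : Type*} [AddCommGroup W] [Module k W] [FiniteDimensional k W] [Nontrivial W]
    (σ : Representation k G W)
    (hσ : ∀ p : Submodule k W, (∀ g : G, ∀ v ∈ p, σ g v ∈ p) → p = ⊥ ∨ p = ⊤) :
    ∃ i, ∃ f : W ≃ₗ[k] V i, ∀ (g : G) (v : W), f (σ g v) = ρ i g (f v) := by
  -- `hAll` only speaks about one universe, so pass through a copy of `k ^ n` living there
  let e : W ≃ₗ[k] ULift (Fin (Module.finrank k W) → k) :=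
    (Module.finBasis k W).equivFun.trans ULift.moduleEquiv.symm
  have : FiniteDimensional k (ULift (Fin (Module.finrank k W) → k)) := Module.Finite.equiv e
  have : Nontrivial (ULift (Fin (Module.finrank k W) → k)) := e.symm.toEquiv.nontrivial
  let σ' : Representation k G (ULift (Fin (Module.finrank k W) → k)) :=
    (e.conjAlgEquiv k).toMonoidHom.comp σ
  have hσ' : ∀ g v, σ' g (e v) = e (σ g v) := fun g v => by
    simp [σ', LinearEquiv.conjAlgEquiv_apply]
  obtain ⟨i, f, hf⟩ := hAll _ σ' fun p hp => by
    have hcomap := hσ (p.comap e.toLinearMap) fun g v hv => by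
      rw [Submodule.mem_comap] at hv ⊢
      exact hσ' g v ▸ hp g _ hv
    rw [← Submodule.map_comap_eq_of_surjective e.surjective p]
    rcases hcomap with h | h <;> simp [h]
  exact ⟨i, e.trans f, fun g v => by simpa [hσ'] using hf g (e v)⟩

section MatrixCoefficients

variable {k G V : Type*} [Field k] [Group G] [AddCommGroup V] [Module k V]

def fixingSubgroup (ρ : Representation k G V) (s : Set V) : Subgroup G where
  carrier := {g | ∀ v ∈ s, ρ g v = v}
  one_mem' := by simp
  mul_mem' ha hb v hv := by simp [Module.End.mul_apply, hb v hv, ha v hv]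
  inv_mem' {g} hg v hv := by rw [inv_apply_eq_iff, hg v hv]

def matrixCoeff (ρ : Representation k G V) (ψ : Module.Dual k V) (v : V) : G → k :=
  fun g => ψ (ρ g v)

def coeffSpace (ρ : Representation k G V) (s : Set V) : Submodule k (G → k) :=
  Submodule.span k (Set.image2 (matrixCoeff ρ) Set.univ s)

lemma matrixCoeff_mem_coeffSpace (ρ : Representation k G V) (ψ : Module.Dual k V) {s : Set V}
    {v : V} (hv : v ∈ s) : matrixCoeff ρ ψ v ∈ coeffSpace ρ s :=
  Submodule.subset_span (Set.mem_image2_of_mem (Set.mem_univ ψ) hv)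

lemma coeffSpace_mono (ρ : Representation k G V) {s t : Set V} (h : s ⊆ t) :
    coeffSpace ρ s ≤ coeffSpace ρ t :=
  Submodule.span_mono (Set.image2_subset_left h)

lemma matrixCoeff_mul_matrixCoeff {W : Type*} [AddCommGroup W] [Module k W]
    (ρ : Representation k G V) (σ : Representation k G W) (ψ : Module.Dual k V)
    (χ : Module.Dual k W) (v : V) (w : W) :
    matrixCoeff ρ ψ v * matrixCoeff σ χ w =
      matrixCoeff (ρ.tprod σ) (LinearMap.mul' k k ∘ₗ TensorProduct.map ψ χ) (v ⊗ₜ w) := by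
  ext g
  simp [matrixCoeff, tprod_apply]

section Detecting

variable {W : Type*} [AddCommGroup W] [Module k W] [FiniteDimensional k W]
  {σ : Representation k G W} {τ : Representation k G V}

lemma matrixCoeff_mem_coeffSpace_range
    (hdet : ∀ w : W, w ≠ 0 → ∃ q : IntertwiningMap σ τ, q w ≠ 0) (Φ : Module.Dual k W) (w : W) :
    matrixCoeff σ Φ w ∈ coeffSpace τ (Set.range fun q : IntertwiningMap σ τ => q w) := by
  let D : Set (Module.Dual k W) :=
    {χ | ∃ (ψ : Module.Dual k V) (q : IntertwiningMap σ τ), ψ ∘ₗ q.toLinearMap = χ}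
  have hD : Submodule.span k D = ⊤ := by
    refine Submodule.span_eq_top_of_ne_zero fun z hz => ?_
    obtain ⟨q, hq⟩ := hdet z hz
    obtain ⟨ψ, hψ⟩ := Module.Projective.exists_dual_ne_zero k hq
    exact ⟨ψ ∘ₗ q.toLinearMap, ⟨ψ, q, rfl⟩, hψ⟩
  let coeff : Module.Dual k W →ₗ[k] G → k := LinearMap.pi fun g => Module.Dual.eval k W (σ g w)
  have hgen : D ⊆ (coeffSpace τ (Set.range fun q : IntertwiningMap σ τ => q w)).comap coeff := by
    rintro _ ⟨ψ, q, rfl⟩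
    have : coeff (ψ ∘ₗ q.toLinearMap) = matrixCoeff τ ψ (q w) := by
      ext g
      simp [coeff, matrixCoeff, q.isIntertwining]
    rw [SetLike.mem_coe, Submodule.mem_comap, this]
    exact matrixCoeff_mem_coeffSpace τ ψ ⟨q, rfl⟩
  exact Submodule.span_le.mpr hgen (hD ▸ Submodule.mem_top)

end Detecting

section TensorClosed

variable {τ : Representation k G V} {R : Submodule k V}

lemma mul_mem_coeffSpace [FiniteDimensional k V]
    (hR : ∀ π : IntertwiningMap (τ.tprod τ) τ, ∀ x ∈ R, ∀ y ∈ R, π (x ⊗ₜ y) ∈ R)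
    (hdet : ∀ w : V ⊗[k] V, w ≠ 0 → ∃ q : IntertwiningMap (τ.tprod τ) τ, q w ≠ 0)
    {f f' : G → k} (hf : f ∈ coeffSpace τ R) (hf' : f' ∈ coeffSpace τ R) :
    f * f' ∈ coeffSpace τ R := by
  have hgen : Set.image2 (matrixCoeff τ) Set.univ R * Set.image2 (matrixCoeff τ) Set.univ R ⊆
      coeffSpace τ R := by
    rintro _ ⟨_, ⟨ψ, -, x, hx, rfl⟩, _, ⟨ψ', -, y, hy, rfl⟩, rfl⟩
    change matrixCoeff τ ψ x * matrixCoeff τ ψ' y ∈ _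
    rw [matrixCoeff_mul_matrixCoeff]
    refine coeffSpace_mono τ ?_ (matrixCoeff_mem_coeffSpace_range hdet _ _)
    rintro _ ⟨q, rfl⟩
    exact hR q x hx y hy
  have := Submodule.mul_mem_mul hf hf'
  rw [coeffSpace, Submodule.span_mul_span] at this
  exact Submodule.span_le.mpr hgen this

lemma apply_mem_of_intertwiningMap
    (hR : ∀ π : IntertwiningMap (τ.tprod τ) τ, ∀ x ∈ R, ∀ y ∈ R, π (x ⊗ₜ y) ∈ R)
    {φ : Module.Dual k V} (hφ : ∀ g v, φ (τ g v) = φ v) {v₀ : V} (hv₀ : v₀ ∈ R)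
    (hφv₀ : φ v₀ = 1) (A : IntertwiningMap τ τ) {x : V} (hx : x ∈ R) : A x ∈ R := by
  let π : IntertwiningMap (τ.tprod τ) τ :=
    ⟨(_root_.TensorProduct.rid k V).toLinearMap ∘ₗ TensorProduct.map A.toLinearMap φ, fun g =>
      TensorProduct.ext' fun x y => by simp [tprod_apply, hφ, A.isIntertwining]⟩
  simpa [π, hφv₀] using hR π x hx v₀ hv₀

lemma inv_mul_mem_fixingSubgroup {a b : G} (h : ∀ f ∈ coeffSpace τ R, f a = f b) :
    b⁻¹ * a ∈ fixingSubgroup τ R := by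
  intro w hw
  have hab : τ a w = τ b w := by
    rw [← sub_eq_zero, ← Module.forall_dual_apply_eq_zero_iff k]
    intro ψ
    simpa [matrixCoeff, sub_eq_zero] using h _ (matrixCoeff_mem_coeffSpace τ ψ hw)
  rw [map_mul, Module.End.mul_apply, hab, inv_self_apply]

lemma mem_of_matrixCoeff_mem_coeffSpace [Fintype G] [NeZero (Nat.card G : k)]
    [FiniteDimensional k V] (hR : ∀ A : IntertwiningMap τ τ, ∀ x ∈ R, A x ∈ R) {x : V}
    (hx : ∀ ψ, matrixCoeff τ ψ x ∈ coeffSpace τ R) : x ∈ R := by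
  have hnorm : ∀ A, IsIntertwiningMap τ τ (norm (linHom τ τ) A) := fun A =>
    (mem_linHom_invariants_iff_isIntertwining _).mp fun g => self_norm_apply (linHom τ τ) g A
  let T (y : V) : (G → k) →ₗ[k] V := ∑ g, (LinearMap.proj g⁻¹).smulRight (τ g y)
  have hT : ∀ y ψ v, T y (matrixCoeff τ ψ v) = norm (linHom τ τ) (ψ.smulRight y) v := by
    intro y ψ v
    simp [T, norm, matrixCoeff]
  have hTR : ∀ y, ∀ f ∈ coeffSpace τ R, T y f ∈ R := by
    intro y f hf
    refine Submodule.span_le (p := R.comap (T y)) |>.mpr ?_ hf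
    rintro _ ⟨ψ, -, w, hw, rfl⟩
    rw [SetLike.mem_coe, Submodule.mem_comap, hT]
    exact hR ((norm (linHom τ τ) (ψ.smulRight y)).intertwiningMap_of_isIntertwiningMap τ τ
      (hnorm _).isIntertwining) w hw
  let b := Module.finBasis k V
  have hsum : ∑ i, T (b i) (matrixCoeff τ (b.coord i) x) = (Nat.card G : k) • x := by
    have hid : ∑ i, (b.coord i).smulRight (b i) = LinearMap.id := by
      ext v
      simp [Module.Basis.sum_repr]
    simp_rw [hT, ← LinearMap.sum_apply, ← map_sum, hid]
    simp [norm, Finset.card_univ, ← Nat.card_eq_fintype_card, Nat.cast_smul_eq_nsmul]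
  have := R.smul_mem (Nat.card G : k)⁻¹ (hsum ▸ R.sum_mem fun i _ => hTR _ _ (hx _))
  rwa [smul_smul, inv_mul_cancel₀ (NeZero.ne _), one_smul] at this

theorem mem_of_forall_mem_fixingSubgroup [Fintype G] [NeZero (Nat.card G : k)]
    [FiniteDimensional k V]
    (hR : ∀ π : IntertwiningMap (τ.tprod τ) τ, ∀ x ∈ R, ∀ y ∈ R, π (x ⊗ₜ y) ∈ R)
    (hdet : ∀ w : V ⊗[k] V, w ≠ 0 → ∃ q : IntertwiningMap (τ.tprod τ) τ, q w ≠ 0)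
    {φ : Module.Dual k V} (hφ : ∀ g v, φ (τ g v) = φ v) {v₀ : V} (hv₀ : v₀ ∈ R)
    (hφv₀ : φ v₀ = 1) {x : V} (hx : ∀ h ∈ fixingSubgroup τ R, τ h x = x) : x ∈ R := by
  have hone : (1 : G → k) = matrixCoeff τ φ v₀ := by
    ext g
    simp [matrixCoeff, hφ, hφv₀]
  let S := (coeffSpace τ R).toSubalgebra (hone ▸ matrixCoeff_mem_coeffSpace τ φ hv₀)
    fun _ _ => mul_mem_coeffSpace hR hdet
  refine mem_of_matrixCoeff_mem_coeffSpace (apply_mem_of_intertwiningMap hR hφ hv₀ hφv₀)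
    fun ψ => S.mem_of_forall_apply_eq fun a b hab => ?_
  have hfix := hx _ (inv_mul_mem_fixingSubgroup hab)
  calc matrixCoeff τ ψ x a = ψ (τ b (τ (b⁻¹ * a) x)) := by
        simp [matrixCoeff, ← Module.End.mul_apply, ← map_mul]
    _ = matrixCoeff τ ψ x b := by rw [hfix]; rfl

end TensorClosed

end MatrixCoefficients

end Representation

section piRep

variable {k G ι : Type*} [CommSemiring k] [Monoid G] {V : ι → Type*}
  [∀ i, AddCommMonoid (V i)] [∀ i, Module k (V i)] (ρ : ∀ i, Representation k G (V i))

lemma piRep_apply (g : G) (x : ∀ i, V i) (i : ι) : piRep V ρ g x i = ρ i g (x i) := rfl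

lemma piRep_single [DecidableEq ι] (g : G) (i : ι) (v : V i) :
    piRep V ρ g (Pi.single i v) = Pi.single i (ρ i g v) := by
  ext j
  rcases eq_or_ne j i with rfl | hj
  · simp [piRep_apply]
  · simp [piRep_apply, hj]

end piRep

theorem exists_intertwiningMap_piRep_apply_ne_zero {k : Type} [Field k] {G : Type*} [Group G]
    [Finite G] [NeZero (Nat.card G : k)] {ι : Type*} [DecidableEq ι] {V : ι → Type*}
    [∀ i, AddCommGroup (V i)] [∀ i, Module k (V i)] (ρ : ∀ i, Representation k G (V i))
    (hAll : ∀ (U : Type*) [AddCommGroup U] [Module k U] [FiniteDimensional k U]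
      [Nontrivial U] (σ : Representation k G U),
      (∀ p : Submodule k U, (∀ g : G, ∀ v ∈ p, σ g v ∈ p) → p = ⊥ ∨ p = ⊤) →
      ∃ i, ∃ f : U ≃ₗ[k] V i, ∀ (g : G) (v : U), f (σ g v) = ρ i g (f v))
    {W : Type*} [AddCommGroup W] [Module k W] [FiniteDimensional k W]
    (σ : Representation k G W) {w : W} (hw : w ≠ 0) :
    ∃ q : Representation.IntertwiningMap σ (piRep V ρ), q w ≠ 0 := by
  obtain ⟨P, _, hP, f, hfw⟩ :=
    Representation.exists_irreducible_subrepresentation_apply_ne_zero σ hw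
  obtain ⟨i, e, he⟩ := Representation.exists_equiv_of_forall_irreducible ρ hAll _ hP
  refine ⟨(LinearMap.single k V i ∘ₗ e.toLinearMap ∘ₗ f.toLinearMap)
    |>.intertwiningMap_of_isIntertwiningMap _ _ fun g x => ?_, ?_⟩
  · simp [f.isIntertwining, he, piRep_single]
  · simpa using hfw

theorem invariant_subspace_eq_fixedPoints_general
    (G : Type*) [Group G] [Fintype G]
    (ι : Type*) [Fintype ι] [DecidableEq ι] (V : ι → Type*)
    [∀ i, AddCommGroup (V i)] [∀ i, Module ℂ (V i)]
    [∀ i, FiniteDimensional ℂ (V i)]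
    (ρ : ∀ i, Representation ℂ G (V i))
    (hAll : ∀ (U : Type*) [AddCommGroup U] [Module ℂ U] [FiniteDimensional ℂ U]
      [Nontrivial U] (σ : Representation ℂ G U),
      (∀ p : Submodule ℂ U, (∀ g : G, ∀ v ∈ p, σ g v ∈ p) → p = ⊥ ∨ p = ⊤) →
      ∃ i, ∃ f : U ≃ₗ[ℂ] V i, ∀ (g : G) (v : U), f (σ g v) = ρ i g (f v))
    (i₀ : ι) (hTriv : ∀ (g : G) (v : V i₀), ρ i₀ g v = v)
    (hDim : Module.finrank ℂ (V i₀) = 1)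
    (R : Submodule ℂ (∀ i, V i))
    (hR1 : LinearMap.range (LinearMap.single ℂ V i₀) ≤ R)
    (hClosed : ∀ π : ((∀ i, V i) ⊗[ℂ] (∀ i, V i)) →ₗ[ℂ] (∀ i, V i),
      (∀ g : G, π ∘ₗ ((piRep V ρ).tprod (piRep V ρ) g) = (piRep V ρ g) ∘ₗ π) →
      ∀ x ∈ R, ∀ y ∈ R, π (x ⊗ₜ[ℂ] y) ∈ R) :
    ∃ H : Subgroup G,
      R = ⨅ h ∈ H, LinearMap.eqLocus (piRep V ρ h)
        (LinearMap.id : (∀ i, V i) →ₗ[ℂ] ∀ i, V i) := by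
  have := Module.nontrivial_of_finrank_eq_succ hDim
  obtain ⟨v₀, hv₀⟩ := exists_ne (0 : V i₀)
  obtain ⟨φ₀, hφ₀⟩ := Module.Projective.exists_dual_eq_one ℂ hv₀
  refine ⟨(piRep V ρ).fixingSubgroup R, le_antisymm (fun x hx => ?_) fun x hx => ?_⟩
  · simp only [Submodule.mem_iInf, LinearMap.mem_eqLocus, LinearMap.id_apply]
    exact fun h hh => hh x hx
  · simp only [Submodule.mem_iInf, LinearMap.mem_eqLocus, LinearMap.id_apply] at hx
    exact Representation.mem_of_forall_mem_fixingSubgroup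
      (fun π => hClosed π.toLinearMap π.isIntertwining')
      (fun w hw => exists_intertwiningMap_piRep_apply_ne_zero ρ hAll _ hw)
      (φ := φ₀ ∘ₗ LinearMap.proj i₀) (fun g v => by simp [piRep_apply, hTriv])
      (hR1 ⟨v₀, rfl⟩) (by simpa using hφ₀) hx

/-- let `M = ⊕_χ M_χ` be the multiplicity-free direct sum of all the
irreducible complex `G`-modules, with `M_{i₀}` the trivial one, and let `R ⊆ M` be a
subspace containing the trivial summand such that `π(R ⊗ R) ⊆ R` for every `G`-module
homomorphism `π : M ⊗ M → M`.  Then `R = M^H` for some subgroup `H ≤ G`. -/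
theorem invariant_subspace_eq_fixedPoints
    (G : Type*) [Group G] [Fintype G]
    (ι : Type*) [Fintype ι] [DecidableEq ι] (V : ι → Type*)
    [∀ i, AddCommGroup (V i)] [∀ i, Module ℂ (V i)]
    [∀ i, FiniteDimensional ℂ (V i)] [∀ i, Nontrivial (V i)]
    (ρ : ∀ i, Representation ℂ G (V i))
    (hSimple : ∀ i, ∀ p : Submodule ℂ (V i),
      (∀ g : G, ∀ v ∈ p, ρ i g v ∈ p) → p = ⊥ ∨ p = ⊤)
    (hNonIso : ∀ i j, i ≠ j →
      ¬ ∃ f : V i ≃ₗ[ℂ] V j, ∀ (g : G) (v : V i), f (ρ i g v) = ρ j g (f v))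
    (hAll : ∀ (U : Type*) [AddCommGroup U] [Module ℂ U] [FiniteDimensional ℂ U]
      [Nontrivial U] (σ : Representation ℂ G U),
      (∀ p : Submodule ℂ U, (∀ g : G, ∀ v ∈ p, σ g v ∈ p) → p = ⊥ ∨ p = ⊤) →
      ∃ i, ∃ f : U ≃ₗ[ℂ] V i, ∀ (g : G) (v : U), f (σ g v) = ρ i g (f v))
    (i₀ : ι) (hTriv : ∀ (g : G) (v : V i₀), ρ i₀ g v = v)
    (hDim : Module.finrank ℂ (V i₀) = 1)
    (R : Submodule ℂ (∀ i, V i))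
    (hR1 : LinearMap.range (LinearMap.single ℂ V i₀) ≤ R)
    (hClosed : ∀ π : ((∀ i, V i) ⊗[ℂ] (∀ i, V i)) →ₗ[ℂ] (∀ i, V i),
      (∀ g : G, π ∘ₗ ((piRep V ρ).tprod (piRep V ρ) g) = (piRep V ρ g) ∘ₗ π) →
      ∀ x ∈ R, ∀ y ∈ R, π (x ⊗ₜ[ℂ] y) ∈ R) :
    ∃ H : Subgroup G,
      R = ⨅ h ∈ H, LinearMap.eqLocus (piRep V ρ h)
        (LinearMap.id : (∀ i, V i) →ₗ[ℂ] ∀ i, V i) :=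
  invariant_subspace_eq_fixedPoints_general G ι V ρ hAll i₀ hTriv hDim R hR1 hClosed
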